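/- Let q > 1 be a real number and let h, N be integers with 0 ≤ h ≤ N. Then ∑_{s=0}^{h} (-1)^s (-q)^{s(1-s)/2} · ∏_{l=1}^{N-s}(1 - (-q)^{-l}) / [ ∏_{l=1}^{s}(1 - (-q)^{-l}) · ∏_{l=1}^{h-s}(1 - (-q)^{-l}) ] = (-1)^h (-q)^{-hN + h(h-1)/2} · ∏_{l=1}^{N-h}(1 - (-q)^{-l}) / ∏_{l=1}^{h}(1 - (-q)^{-l}). -/

import Mathlib

/-!
Put `x = (-q)⁻¹`. The products are then the q-Pochhammer symbols `(x; x)_n`, the quotient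
`(x; x)_h / ((x; x)_s (x; x)_{h-s})` is the Gaussian binomial coefficient `[h, s]_x`, and
`(-q)^(s(1-s)/2) = x^(s choose 2)`, so after clearing the common denominator `(x; x)_h` the
identity reads
`∑ₛ (-1)^s x^(s choose 2) [h, s]_x (x; x)_{N-s} = (-1)^h x^(h(N-h) + (h+1 choose 2)) (x; x)_{N-h}`.
This holds in every commutative ring: splitting `[h+1, s]_x` by the q-Pascal rule, the left side
for `(h+1, N+1)` telescopes to `-x^(N+1)` times the left side for `(h, N)`, and induction on `h`
concludes.
-/

open Finset

section QAnalogues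

variable {R : Type*} [CommRing R]

def qPochhammer (x : R) (n : ℕ) : R := ∏ l ∈ Icc 1 n, (1 - x ^ l)

@[simp]
lemma qPochhammer_zero (x : R) : qPochhammer x 0 = 1 := by simp [qPochhammer]

lemma qPochhammer_succ (x : R) (n : ℕ) :
    qPochhammer x (n + 1) = qPochhammer x n * (1 - x ^ (n + 1)) :=
  prod_Icc_succ_top (by omega) _

-- Defined by the q-Pascal rule rather than as a quotient, so that it lives in any commutative ring.
def gaussianBinomial (x : R) : ℕ → ℕ → R
  | _, 0 => 1
  | 0, _ + 1 => 0
  | h + 1, s + 1 => gaussianBinomial x h s + x ^ (s + 1) * gaussianBinomial x h (s + 1)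

@[simp]
lemma gaussianBinomial_zero_right (x : R) (h : ℕ) : gaussianBinomial x h 0 = 1 := by
  cases h <;> rfl

lemma gaussianBinomial_succ_succ (x : R) (h s : ℕ) :
    gaussianBinomial x (h + 1) (s + 1) =
      gaussianBinomial x h s + x ^ (s + 1) * gaussianBinomial x h (s + 1) := rfl

lemma gaussianBinomial_eq_zero_of_lt (x : R) {h s : ℕ} (hs : h < s) :
    gaussianBinomial x h s = 0 := by
  induction h generalizing s with
  | zero => obtain ⟨t, rfl⟩ := Nat.exists_eq_add_of_lt hs; rfl
  | succ h ih =>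
    obtain ⟨t, rfl⟩ : ∃ t, s = t + 1 := ⟨s - 1, by omega⟩
    rw [gaussianBinomial_succ_succ, ih (by omega), ih (by omega), mul_zero, add_zero]

theorem gaussianBinomial_mul_qPochhammer_mul_qPochhammer (x : R) {h s : ℕ} (hs : s ≤ h) :
    gaussianBinomial x h s * qPochhammer x s * qPochhammer x (h - s) = qPochhammer x h := by
  induction h generalizing s with
  | zero => obtain rfl := Nat.le_zero.1 hs; simp
  | succ h ih =>
    obtain _ | s := s
    · simp
    rw [gaussianBinomial_succ_succ]
    obtain rfl | hsh := eq_or_lt_of_le (Nat.le_of_succ_le_succ hs)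
    · have ih_self := ih le_rfl
      rw [Nat.sub_self, qPochhammer_zero, mul_one] at ih_self
      rw [gaussianBinomial_eq_zero_of_lt x (Nat.lt_succ_self s), Nat.sub_self, qPochhammer_zero,
        qPochhammer_succ]
      linear_combination (1 - x ^ (s + 1)) * ih_self
    · obtain ⟨m, rfl⟩ := Nat.exists_eq_add_of_lt hsh
      have ih_left := ih (s := s) (by omega)
      have ih_right := ih (s := s + 1) (by omega)
      rw [show s + m + 1 - s = m + 1 by omega, qPochhammer_succ x m] at ih_left
      rw [show s + m + 1 - (s + 1) = m by omega, qPochhammer_succ x s] at ih_right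
      rw [show s + m + 1 + 1 - (s + 1) = m + 1 by omega, qPochhammer_succ x (s + m + 1),
        qPochhammer_succ x m, qPochhammer_succ x s]
      linear_combination (1 - x ^ (s + 1)) * ih_left + x ^ (s + 1) * (1 - x ^ (m + 1)) * ih_right

lemma sum_gaussianBinomial_succ (x : R) {h M : ℕ} (hM : h ≤ M) :
    ∑ s ∈ range (h + 2),
        (-1) ^ s * x ^ s.choose 2 * gaussianBinomial x (h + 1) s * qPochhammer x (M + 1 - s) =
      -x ^ (M + 1) * ∑ s ∈ range (h + 1),
        (-1) ^ s * x ^ s.choose 2 * gaussianBinomial x h s * qPochhammer x (M - s) := by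
  set V : ℕ → R := fun s =>
    (-1) ^ s * x ^ (s.choose 2 + s) * gaussianBinomial x h s * qPochhammer x (M + 1 - s)
  set U : ℕ → R := fun s =>
    (-1) ^ s * x ^ (s.choose 2 + s) * gaussianBinomial x h s * qPochhammer x (M - s)
  -- `V s` and `U s` differ only in the last factor `1 - x ^ (M + 1 - s)` of `(x; x)_{M+1-s}`.
  have pascal_split : ∀ s, (-1) ^ (s + 1) * x ^ (s + 1).choose 2 *
      gaussianBinomial x (h + 1) (s + 1) * qPochhammer x (M + 1 - (s + 1)) = V (s + 1) - U s := by
    intro s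
    simp only [V, U, gaussianBinomial_succ_succ, Nat.choose_succ_succ', Nat.choose_one_right,
      Nat.add_sub_add_right]
    ring
  have sum_V : ∑ s ∈ range (h + 2), V s = ∑ s ∈ range (h + 1), V s := by
    rw [sum_range_succ, add_eq_left]
    simp only [V, gaussianBinomial_eq_zero_of_lt x (Nat.lt_succ_self h), mul_zero, zero_mul]
  have V_sub_U : ∀ s ∈ range (h + 1), V s - U s = -x ^ (M + 1) *
      ((-1) ^ s * x ^ s.choose 2 * gaussianBinomial x h s * qPochhammer x (M - s)) := by
    intro s hs
    have hsM : s ≤ M := by have := mem_range.1 hs; omega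
    obtain ⟨k, rfl⟩ := Nat.exists_eq_add_of_le hsM
    simp only [V, U, show s + k + 1 - s = k + 1 by omega, Nat.add_sub_cancel_left, qPochhammer_succ]
    ring
  rw [sum_range_succ', sum_congr rfl fun s _ => pascal_split s, sum_sub_distrib, mul_sum,
    ← sum_congr rfl V_sub_U, sum_sub_distrib, ← sum_V, sum_range_succ' V]
  simp [V, sub_add_eq_add_sub]

theorem sum_alternating_gaussianBinomial_mul_qPochhammer (x : R) {h N : ℕ} (hN : h ≤ N) :
    ∑ s ∈ range (h + 1),
        (-1) ^ s * x ^ s.choose 2 * gaussianBinomial x h s * qPochhammer x (N - s) =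
      (-1) ^ h * x ^ (h * (N - h) + (h + 1).choose 2) * qPochhammer x (N - h) := by
  induction h generalizing N with
  | zero => simp
  | succ h ih =>
    obtain ⟨M, rfl⟩ : ∃ M, N = M + 1 := ⟨N - 1, by omega⟩
    have hM : h ≤ M := by omega
    have exponent : (h + 1) * (M + 1 - (h + 1)) + (h + 1 + 1).choose 2 =
        (M + 1) + (h * (M - h) + (h + 1).choose 2) := by
      obtain ⟨k, rfl⟩ := Nat.exists_eq_add_of_le hM
      rw [Nat.choose_succ_succ' (h + 1), Nat.choose_one_right, Nat.add_sub_add_right,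
        Nat.add_sub_cancel_left]
      ring
    rw [sum_gaussianBinomial_succ x hM, ih hM, exponent, Nat.add_sub_add_right, pow_add]
    ring

end QAnalogues

lemma qPochhammer_ne_zero {K : Type*} [NormedField K] {x : K} (hx : ‖x‖ < 1) (n : ℕ) :
    qPochhammer x n ≠ 0 := by
  refine prod_ne_zero_iff.2 fun l hl => sub_ne_zero.2 fun h_one => ?_
  have : ‖x ^ l‖ < 1 := by
    rw [norm_pow]
    exact pow_lt_one₀ (norm_nonneg x) hx (by have := (mem_Icc.1 hl).1; omega)
  rw [← h_one, norm_one] at this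
  exact lt_irrefl _ this

lemma gaussianBinomial_eq_div {K : Type*} [Field K] {x : K} {h s : ℕ} (hs : s ≤ h)
    (hPs : qPochhammer x s ≠ 0) (hPhs : qPochhammer x (h - s) ≠ 0) :
    gaussianBinomial x h s = qPochhammer x h / (qPochhammer x s * qPochhammer x (h - s)) :=
  eq_div_of_mul_eq (mul_ne_zero hPs hPhs) <| by
    rw [← mul_assoc, gaussianBinomial_mul_qPochhammer_mul_qPochhammer x hs]

lemma natCast_choose_two_mul_two (n : ℕ) : (n.choose 2 : ℤ) * 2 = n * (n - 1) := by
  induction n with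
  | zero => simp
  | succ n ih =>
    rw [Nat.choose_succ_succ', Nat.choose_one_right]
    push_cast
    linear_combination ih

lemma natCast_mul_one_sub_ediv_two (s : ℕ) : (s : ℤ) * (1 - s) / 2 = -(s.choose 2 : ℕ) := by
  rw [show (s : ℤ) * (1 - s) = -((s.choose 2 : ℤ) * 2) by
    linear_combination natCast_choose_two_mul_two s]
  omega

lemma neg_mul_add_mul_sub_one_ediv_two {h N : ℕ} (hN : h ≤ N) :
    -((h : ℤ) * N) + h * (h - 1) / 2 = -((h * (N - h) + (h + 1).choose 2 : ℕ) : ℤ) := by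
  rw [← natCast_choose_two_mul_two h, Int.mul_ediv_cancel _ two_ne_zero,
    Nat.choose_succ_succ', Nat.choose_one_right]
  push_cast [hN]
  linear_combination natCast_choose_two_mul_two h

/-- Identity (5.26.2) of the paper. -/
theorem stmt_4 (q : ℝ) (hq : 1 < q) (h N : ℕ) (hN : h ≤ N) :
    ∑ s ∈ Finset.range (h + 1),
      (-1 : ℝ) ^ s * (-q) ^ (((s : ℤ) * (1 - (s : ℤ))) / 2) *
        (∏ l ∈ Finset.Icc 1 (N - s), (1 - (-q) ^ (-(l : ℤ)))) /
        ((∏ l ∈ Finset.Icc 1 s, (1 - (-q) ^ (-(l : ℤ)))) *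
          (∏ l ∈ Finset.Icc 1 (h - s), (1 - (-q) ^ (-(l : ℤ)))))
    = (-1 : ℝ) ^ h * (-q) ^ (-((h : ℤ) * (N : ℤ)) + ((h : ℤ) * ((h : ℤ) - 1)) / 2) *
        (∏ l ∈ Finset.Icc 1 (N - h), (1 - (-q) ^ (-(l : ℤ)))) /
        (∏ l ∈ Finset.Icc 1 h, (1 - (-q) ^ (-(l : ℤ)))) := by
  set x : ℝ := (-q)⁻¹ with hx_def
  have hx : ‖x‖ < 1 := by
    rw [hx_def, norm_inv, norm_neg, Real.norm_of_nonneg (by linarith)]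
    exact inv_lt_one_of_one_lt₀ hq
  have hP := qPochhammer_ne_zero hx
  have zpow_neg_eq : ∀ n : ℕ, (-q) ^ (-(n : ℤ)) = x ^ n := fun n => by
    rw [zpow_neg, zpow_natCast, inv_pow]
  have hprod : ∀ n : ℕ, ∏ l ∈ Icc 1 n, (1 - (-q) ^ (-(l : ℤ))) = qPochhammer x n := by
    intro n
    simp only [zpow_neg_eq, qPochhammer]
  simp only [hprod]
  simp only [natCast_mul_one_sub_ediv_two, neg_mul_add_mul_sub_one_ediv_two hN, zpow_neg_eq]
  rw [← sum_alternating_gaussianBinomial_mul_qPochhammer x hN, sum_div]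
  refine sum_congr rfl fun s hs => ?_
  rw [gaussianBinomial_eq_div (Nat.lt_succ_iff.1 (mem_range.1 hs)) (hP _) (hP _)]
  field_simp [hP h]
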